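/- Let C be a pointed regular category with coequalizers that is factor permutable. Then C satisfies property (P): products of coequalizer diagrams are coequalizer diagrams. (One may use the weak shifting lemma: for equivalence relations R, S on a product A × B with Eq(π₁) ∩ R ≤ S, if (a,c) S (d,f), (a,c) R (d,f), (a,b) R (d,e), and the pairs (a,b),(a,c) and (d,e),(d,f) are each Eq(π₁)-related, then (a,b) S (d,e).) -/

import Mathlib

/-!
Pullback stability makes `q₁ × 1` and `1 × q₂` regular epimorphisms, so their composite
`q₁ × q₂` is a strong epimorphism, hence regular by the (regular epi, mono) factorisation. It
remains to show that a map `t : X × Y ⟶ Z` coequalizing `u × u'` and `v × v'` identifies any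
two generalized elements identified by `q₁ × q₂`. As the category is pointed, `t (-, 0)`
coequalizes `u` and `v`, so `t (x, 0) = t (x', 0)` whenever `q₁ x = q₁ x'`. Factor
permutability moves the second coordinate from `0` to any `y`: from
`(x, y) Eq(π₁) (x, 0) Eq⟨t, π₂⟩ (x', 0)` it produces, locally, `b` with
`(x, y) Eq⟨t, π₂⟩ b Eq(π₁) (x', 0)`, and then `b = (x', y)`. Together with the symmetric
argument in the second coordinate, `t (x, y) = t (x', y) = t (x', y')`.
-/

open CategoryTheory Limits

/-- `q` is a coequalizer of the parallel pair `(u, v)`. -/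
def IsCoeq {C : Type*} [Category C] {T X Q : C} (u v : T ⟶ X) (q : X ⟶ Q) : Prop :=
  ∃ h : u ≫ q = v ≫ q, Nonempty (IsColimit (Cofork.ofπ q h))

/-- Property (P): the product of two coequalizer diagrams is a coequalizer diagram. -/
def PropertyP (C : Type*) [Category C] [HasBinaryProducts C] : Prop :=
  ∀ {T₁ T₂ X X' Y Y' : C} (u v : T₁ ⟶ X) (u' v' : T₂ ⟶ Y) (q₁ : X ⟶ X') (q₂ : Y ⟶ Y'),
    IsCoeq u v q₁ → IsCoeq u' v' q₂ →
      IsCoeq (prod.map u u') (prod.map v v') (prod.map q₁ q₂)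

/-- A regular epimorphism: a coequalizer of some parallel pair. -/
def IsRegEpi {C : Type*} [Category C] {X Q : C} (q : X ⟶ Q) : Prop :=
  ∃ (T : C) (a b : T ⟶ X), IsCoeq a b q

/-- A generalized element `m : S ⟶ X` belongs to the (sub)object `r : R ⟶ X` if it
factors through `r`. -/
def Factors {C : Type*} [Category C] {R X S : C} (r : R ⟶ X) (m : S ⟶ X) : Prop :=
  ∃ h : S ⟶ R, h ≫ r = m

/-- The relation on generalized elements determined by a relation `r : R ⟶ X ⨯ X`. -/
def ERel {C : Type*} [Category C] [HasBinaryProducts C] {R X S : C}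
    (r : R ⟶ X ⨯ X) (a b : S ⟶ X) : Prop :=
  Factors r (prod.lift a b)

/-- `r : R ⟶ X ⨯ X` is an (internal) equivalence relation: a monomorphism whose
induced relation on generalized elements is reflexive, symmetric and transitive. -/
def IsEquivRel {C : Type*} [Category C] [HasBinaryProducts C] {R X : C}
    (r : R ⟶ X ⨯ X) : Prop :=
  Mono r ∧ (∀ {S : C} (a : S ⟶ X), ERel r a a) ∧
    (∀ {S : C} (a b : S ⟶ X), ERel r a b → ERel r b a) ∧
    (∀ {S : C} (a b c : S ⟶ X), ERel r a b → ERel r b c → ERel r a c)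

/-- The composite `R₂ ∘ R₁` of two relations on `X`, on generalized elements, in the
internal logic of a regular category: `a (R₂ ∘ R₁) c` iff locally (i.e. after
precomposing with a regular epimorphism) there is `b` with `a R₁ b` and `b R₂ c`. -/
def CompRelInt {C : Type*} [Category C] [HasBinaryProducts C] {R₁' R₂' X S : C}
    (R₂ : R₂' ⟶ X ⨯ X) (R₁ : R₁' ⟶ X ⨯ X) (a c : S ⟶ X) : Prop :=
  ∃ (S' : C) (e : S' ⟶ S), IsRegEpi e ∧
    ∃ b : S' ⟶ X, ERel R₁ (e ≫ a) b ∧ ERel R₂ b (e ≫ c)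

/-- The kernel pair of a morphism `f`, as a relation `Eq(f) ⟶ X ⨯ X`. -/
noncomputable def kerRel {C : Type*} [Category C] [HasFiniteLimits C] {X Y : C}
    (f : X ⟶ Y) : pullback f f ⟶ X ⨯ X :=
  prod.lift (pullback.fst f f) (pullback.snd f f)

/-- Factor permutability: every factor relation (kernel pair of a product
projection) permutes with every equivalence relation on the same object. -/
def FactorPermutable (C : Type*) [Category C] [HasFiniteLimits C] : Prop :=
  ∀ {A B E' : C} (E : E' ⟶ (A ⨯ B) ⨯ (A ⨯ B)), IsEquivRel E →
    ∀ {S : C} (a c : S ⟶ A ⨯ B),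
      CompRelInt E (kerRel (prod.fst : A ⨯ B ⟶ A)) a c ↔
        CompRelInt (kerRel (prod.fst : A ⨯ B ⟶ A)) E a c

section

attribute [local simp] prod.lift_fst prod.lift_snd pullback.lift_fst pullback.lift_snd

variable {C : Type*} [Category C]

theorem isRegEpi_iff_isRegularEpi {X Q : C} (q : X ⟶ Q) : IsRegEpi q ↔ IsRegularEpi q := by
  constructor
  · rintro ⟨T, a, b, w, ⟨hc⟩⟩
    exact isRegularEpi_of_regularEpi (Cofork.IsColimit.regularEpi hc)
  · intro _
    exact ⟨_, IsRegularEpi.left q, IsRegularEpi.right q, IsRegularEpi.w q,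
      ⟨IsRegularEpi.isColimit q⟩⟩

theorem IsCoeq.comp_eq_comp {T X Q Z S : C} {u v : T ⟶ X} {q : X ⟶ Q} (hq : IsCoeq u v q)
    {s : X ⟶ Z} (hs : u ≫ s = v ≫ s) {x x' : S ⟶ X} (hx : x ≫ q = x' ≫ q) :
    x ≫ s = x' ≫ s := by
  obtain ⟨w, ⟨hc⟩⟩ := hq
  obtain ⟨d, hd⟩ := Cofork.IsColimit.desc' hc s hs
  simp only [Cofork.π_ofπ] at hd
  rw [← hd, reassoc_of% hx]

theorem isCoeq_of_effectiveEpi {T X Q : C} {u v : T ⟶ X} {q : X ⟶ Q} [EffectiveEpi q]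
    (w : u ≫ q = v ≫ q)
    (h : ∀ {Z S : C} (s : X ⟶ Z), u ≫ s = v ≫ s →
      ∀ (a b : S ⟶ X), a ≫ q = b ≫ q → a ≫ s = b ≫ s) :
    IsCoeq u v q :=
  ⟨w, ⟨Cofork.IsColimit.mk _
    (fun c => EffectiveEpi.desc q c.π fun a b hab => h c.π c.condition a b hab)
    (fun _ => EffectiveEpi.fac q _ _) (fun _ m hm => EffectiveEpi.uniq q _ _ m hm)⟩⟩

theorem isRegularEpi_comp
    (hfact : ∀ {X Y : C} (f : X ⟶ Y), ∃ (I : C) (e : X ⟶ I) (m : I ⟶ Y),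
      IsRegEpi e ∧ Mono m ∧ e ≫ m = f)
    {X Y Z : C} {f : X ⟶ Y} {g : Y ⟶ Z} [IsRegularEpi f] [IsRegularEpi g] :
    IsRegularEpi (f ≫ g) := by
  obtain ⟨I, e, m, he, hm, hem⟩ := hfact (f ≫ g)
  rw [isRegEpi_iff_isRegularEpi] at he
  have : StrongEpi (e ≫ m) := hem ▸ inferInstance
  have := strongEpi_of_strongEpi e m
  have := isIso_of_mono_of_strongEpi m
  rw [← hem, ← MorphismProperty.regularEpi_iff]
  exact MorphismProperty.RespectsIso.postcomp _ m e he

theorem isStableUnderBaseChange_regularEpi [HasPullbacks C]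
    (hstab : ∀ {X Y Z : C} (f : X ⟶ Z) (g : Y ⟶ Z), IsRegEpi f →
      IsRegEpi (pullback.snd f g)) :
    (MorphismProperty.regularEpi C).IsStableUnderBaseChange := by
  refine .of_forall_exists_isPullback fun f g _ hg => ⟨_, pullback.snd g f, pullback.fst g f,
    (IsPullback.of_hasPullback g f).flip, ?_⟩
  simp only [MorphismProperty.regularEpi_iff, ← isRegEpi_iff_isRegularEpi] at hg ⊢
  exact hstab g f hg

section ProdMap

variable [HasBinaryProducts C]

theorem isRegularEpi_prodMap_id [(MorphismProperty.regularEpi C).IsStableUnderBaseChange]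
    {X X' : C} (f : X ⟶ X') [IsRegularEpi f] (Y : C) : IsRegularEpi (prod.map f (𝟙 Y)) := by
  rw [← MorphismProperty.regularEpi_iff]
  exact MorphismProperty.of_isPullback (IsPullback.of_prod_fst_with_id f Y) ‹_›

theorem isRegularEpi_id_prodMap [(MorphismProperty.regularEpi C).IsStableUnderBaseChange]
    (X : C) {Y Y' : C} (g : Y ⟶ Y') [IsRegularEpi g] : IsRegularEpi (prod.map (𝟙 X) g) := by
  have := isRegularEpi_prodMap_id g X
  rw [← MorphismProperty.regularEpi_iff] at this ⊢
  exact (MorphismProperty.regularEpi C).arrow_mk_iso_iff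
    (Arrow.isoMk (f := Arrow.mk (prod.map g (𝟙 X))) (prod.braiding Y X) (prod.braiding Y' X)
      (braid_natural g (𝟙 X)).symm) |>.1 this

theorem isRegularEpi_prodMap [(MorphismProperty.regularEpi C).IsStableUnderBaseChange]
    (hfact : ∀ {X Y : C} (f : X ⟶ Y), ∃ (I : C) (e : X ⟶ I) (m : I ⟶ Y),
      IsRegEpi e ∧ Mono m ∧ e ≫ m = f)
    {X X' Y Y' : C} (f : X ⟶ X') (g : Y ⟶ Y') [IsRegularEpi f] [IsRegularEpi g] :
    IsRegularEpi (prod.map f g) := by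
  have := isRegularEpi_prodMap_id f Y
  have := isRegularEpi_id_prodMap X' g
  simpa using isRegularEpi_comp hfact (f := prod.map f (𝟙 Y)) (g := prod.map (𝟙 X') g)

end ProdMap

section KernelPair

variable [HasFiniteLimits C]

theorem eRel_kerRel_iff {X Y S : C} (f : X ⟶ Y) (a b : S ⟶ X) :
    ERel (kerRel f) a b ↔ a ≫ f = b ≫ f := by
  constructor
  · rintro ⟨h, hh⟩
    have ha : h ≫ pullback.fst f f = a := by simpa [kerRel] using hh =≫ prod.fst
    have hb : h ≫ pullback.snd f f = b := by simpa [kerRel] using hh =≫ prod.snd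
    rw [← ha, ← hb, Category.assoc, Category.assoc, pullback.condition]
  · intro h
    exact ⟨pullback.lift a b h, by simp [kerRel]⟩

theorem isEquivRel_kerRel {X Y : C} (f : X ⟶ Y) : IsEquivRel (kerRel f) := by
  refine ⟨⟨fun g h hgh => ?_⟩, fun _ => (eRel_kerRel_iff _ _ _).2 rfl,
    fun _ _ hab => (eRel_kerRel_iff _ _ _).2 ((eRel_kerRel_iff _ _ _).1 hab).symm,
    fun _ _ _ hab hbc => (eRel_kerRel_iff _ _ _).2
      (((eRel_kerRel_iff _ _ _).1 hab).trans ((eRel_kerRel_iff _ _ _).1 hbc))⟩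
  apply pullback.hom_ext
  · simpa [kerRel] using hgh =≫ prod.fst
  · simpa [kerRel] using hgh =≫ prod.snd

theorem FactorPermutable.lift_comp_eq_lift_comp (hFP : FactorPermutable C) {A B Z S : C}
    (t : A ⨯ B ⟶ Z) {x x' : S ⟶ A} {y₀ : S ⟶ B}
    (h₀ : prod.lift x y₀ ≫ t = prod.lift x' y₀ ≫ t) (y : S ⟶ B) :
    prod.lift x y ≫ t = prod.lift x' y ≫ t := by
  set w : A ⨯ B ⟶ Z ⨯ B := prod.lift t prod.snd
  have hcomp : CompRelInt (kerRel w) (kerRel (prod.fst : A ⨯ B ⟶ A))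
      (prod.lift x y) (prod.lift x' y₀) := by
    refine ⟨S, 𝟙 S, (isRegEpi_iff_isRegularEpi _).2 inferInstance, prod.lift x y₀, ?_, ?_⟩
    · simp [eRel_kerRel_iff]
    · rw [eRel_kerRel_iff]
      ext <;> simp [w, h₀]
  obtain ⟨S', e, he, b, hb₁, hb₂⟩ := (hFP (kerRel w) (isEquivRel_kerRel w) _ _).1 hcomp
  rw [isRegEpi_iff_isRegularEpi] at he
  rw [eRel_kerRel_iff] at hb₁ hb₂
  have hb : b = e ≫ prod.lift x' y := by
    ext
    · simpa using hb₂
    · simpa [w] using (hb₁ =≫ prod.snd).symm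
  rw [← cancel_epi e, ← Category.assoc, ← Category.assoc, prod.comp_lift, prod.comp_lift]
  simpa [w, hb] using hb₁ =≫ prod.fst

end KernelPair

section Pointed

variable [HasFiniteLimits C] [HasZeroMorphisms C]

theorem FactorPermutable.lift_comp_eq_lift_comp_of_isCoeq_fst (hFP : FactorPermutable C)
    {T₁ T₂ X Y Q Z S : C} {u v : T₁ ⟶ X} {u' v' : T₂ ⟶ Y} {q : X ⟶ Q} (hq : IsCoeq u v q)
    {t : X ⨯ Y ⟶ Z} (ht : prod.map u u' ≫ t = prod.map v v' ≫ t)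
    {x x' : S ⟶ X} (hx : x ≫ q = x' ≫ q) (y : S ⟶ Y) :
    prod.lift x y ≫ t = prod.lift x' y ≫ t := by
  have hs : u ≫ prod.lift (𝟙 X) 0 ≫ t = v ≫ prod.lift (𝟙 X) 0 ≫ t := by
    simpa [prod.comp_lift_assoc] using prod.lift (𝟙 T₁) (0 : T₁ ⟶ T₂) ≫= ht
  refine hFP.lift_comp_eq_lift_comp t (y₀ := 0) ?_ y
  simpa [prod.comp_lift_assoc] using hq.comp_eq_comp hs hx

theorem FactorPermutable.lift_comp_eq_lift_comp_of_isCoeq_snd (hFP : FactorPermutable C)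
    {T₁ T₂ X Y Q Z S : C} {u v : T₁ ⟶ X} {u' v' : T₂ ⟶ Y} {q : Y ⟶ Q} (hq : IsCoeq u' v' q)
    {t : X ⨯ Y ⟶ Z} (ht : prod.map u u' ≫ t = prod.map v v' ≫ t)
    (x : S ⟶ X) {y y' : S ⟶ Y} (hy : y ≫ q = y' ≫ q) :
    prod.lift x y ≫ t = prod.lift x y' ≫ t := by
  have ht' : prod.map u' u ≫ (prod.braiding Y X).hom ≫ t =
      prod.map v' v ≫ (prod.braiding Y X).hom ≫ t := by
    rw [braid_natural_assoc, braid_natural_assoc, ht]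
  simpa [prod.comp_lift_assoc] using hFP.lift_comp_eq_lift_comp_of_isCoeq_fst hq ht' hy x

end Pointed

end

theorem stmt8_general {C : Type*} [Category C] [HasFiniteLimits C]
    [HasZeroMorphisms C]
    -- regularity: every morphism factors as a regular epi followed by a mono,
    -- and regular epimorphisms are stable under pullback
    (hfact : ∀ {X Y : C} (f : X ⟶ Y), ∃ (I : C) (e : X ⟶ I) (m : I ⟶ Y),
      IsRegEpi e ∧ Mono m ∧ e ≫ m = f)
    (hstab : ∀ {X Y Z : C} (f : X ⟶ Z) (g : Y ⟶ Z), IsRegEpi f →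
      IsRegEpi (pullback.snd f g))
    (hFP : FactorPermutable C) : PropertyP C := by
  have := isStableUnderBaseChange_regularEpi hstab
  intro T₁ T₂ X X' Y Y' u v u' v' q₁ q₂ hc₁ hc₂
  have := (isRegEpi_iff_isRegularEpi q₁).1 ⟨T₁, u, v, hc₁⟩
  have := (isRegEpi_iff_isRegularEpi q₂).1 ⟨T₂, u', v', hc₂⟩
  have := isRegularEpi_prodMap hfact q₁ q₂
  refine isCoeq_of_effectiveEpi (by rw [prod.map_map, prod.map_map, hc₁.1, hc₂.1]) ?_
  intro Z S t ht a b hab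
  have hx : (a ≫ prod.fst) ≫ q₁ = (b ≫ prod.fst) ≫ q₁ := by simpa using hab =≫ prod.fst
  have hy : (a ≫ prod.snd) ≫ q₂ = (b ≫ prod.snd) ≫ q₂ := by simpa using hab =≫ prod.snd
  calc a ≫ t = prod.lift (a ≫ prod.fst) (a ≫ prod.snd) ≫ t := by
        rw [← prod.comp_lift_assoc, prod.lift_fst_snd, Category.id_comp]
    _ = prod.lift (b ≫ prod.fst) (a ≫ prod.snd) ≫ t :=
      hFP.lift_comp_eq_lift_comp_of_isCoeq_fst hc₁ ht hx _
    _ = prod.lift (b ≫ prod.fst) (b ≫ prod.snd) ≫ t :=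
      hFP.lift_comp_eq_lift_comp_of_isCoeq_snd hc₂ ht _ hy
    _ = b ≫ t := by rw [← prod.comp_lift_assoc, prod.lift_fst_snd, Category.id_comp]

theorem stmt8 {C : Type*} [Category C] [HasFiniteLimits C] [HasCoequalizers C]
    [HasZeroObject C] [HasZeroMorphisms C]
    -- regularity: every morphism factors as a regular epi followed by a mono,
    -- and regular epimorphisms are stable under pullback
    (hfact : ∀ {X Y : C} (f : X ⟶ Y), ∃ (I : C) (e : X ⟶ I) (m : I ⟶ Y),
      IsRegEpi e ∧ Mono m ∧ e ≫ m = f)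
    (hstab : ∀ {X Y Z : C} (f : X ⟶ Z) (g : Y ⟶ Z), IsRegEpi f →
      IsRegEpi (pullback.snd f g))
    (hFP : FactorPermutable C) : PropertyP C :=
  stmt8_general hfact hstab hFP
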